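/- arXiv:1906.09185 — 3 statements merged into one kernel-verified Lean document; each statement's English description precedes it below -/
import Mathlib

section
/- For every integer i ≥ 1, every (2^i − 1)-degenerate graph G is not Ramsey for the complete 2^{i+1}-ary tree of height 2^i, T_{2^{i+1}, 2^i}; that is, the edges of G can be coloured with two colours so that there is no monochromatic copy of T_{2^{i+1}, 2^i}. -/
open SimpleGraph

/-- The maximum degree of `G` is at most `d`: every vertex has at most `d` neighbours. -/
def MaxDegLE {α : Type*} (G : SimpleGraph α) (d : ℕ) : Prop :=
  ∀ v, (G.neighborSet v).ncard ≤ d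

/-- A closed walk `c` in `G` has a chord: an edge of `G` between two vertices of `c`
that is not an edge of `c`. -/
def HasChord {α : Type*} (G : SimpleGraph α) {u : α} (c : G.Walk u u) : Prop :=
  ∃ x y, x ∈ c.support ∧ y ∈ c.support ∧ G.Adj x y ∧ s(x, y) ∉ c.edges

/-- A graph is chordal if every cycle of length at least 4 has a chord. -/
def IsChordal {α : Type*} (G : SimpleGraph α) : Prop :=
  ∀ (u : α) (c : G.Walk u u), c.IsCycle → 4 ≤ c.length → HasChord G c

/-- `G` has treewidth at most `w`: `G` is a subgraph of a chordal graph with no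
clique on `w + 2` vertices. -/
def TreewidthLE {α : Type*} (G : SimpleGraph α) (w : ℕ) : Prop :=
  ∃ G' : SimpleGraph α, G ≤ G' ∧ IsChordal G' ∧ G'.CliqueFree (w + 2)

/-- `G` contains a copy of `H` (a subgraph isomorphic to `H`). -/
def HasCopy {α β : Type*} (G : SimpleGraph α) (H : SimpleGraph β) : Prop :=
  ∃ f : β ↪ α, ∀ u v, H.Adj u v → G.Adj (f u) (f v)

/-- Under the edge-colouring `c` of `G`, there is a copy of `H` all of whose edges
get colour `col`. -/
def HasMonoCopy {α β : Type*} (G : SimpleGraph α) (c : Sym2 α → Bool)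
    (H : SimpleGraph β) (col : Bool) : Prop :=
  ∃ f : β ↪ α, ∀ u v, H.Adj u v → G.Adj (f u) (f v) ∧ c s(f u, f v) = col

/-- `G` is Ramsey for `H`: every 2-colouring of the edges of `G` contains a
monochromatic copy of `H`. -/
def IsRamsey {α β : Type*} (G : SimpleGraph α) (H : SimpleGraph β) : Prop :=
  ∀ c : Sym2 α → Bool, ∃ col : Bool, HasMonoCopy G c H col

/-- `G` is `d`-degenerate: every nonempty (induced) subgraph has a vertex of degree
at most `d`. -/
def Degenerate {α : Type*} (d : ℕ) (G : SimpleGraph α) : Prop :=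
  ∀ s : Set α, s.Nonempty → ∃ v ∈ s, (G.neighborSet v ∩ s).ncard ≤ d

/-- The strong product `G ⊠ H`. -/
def strongProd {α β : Type*} (G : SimpleGraph α) (H : SimpleGraph β) :
    SimpleGraph (α × β) where
  Adj a b := (a.1 = b.1 ∧ H.Adj a.2 b.2) ∨ (G.Adj a.1 b.1 ∧ a.2 = b.2) ∨
    (G.Adj a.1 b.1 ∧ H.Adj a.2 b.2)
  symm := by
    constructor
    rintro a b (⟨h1, h2⟩ | ⟨h1, h2⟩ | ⟨h1, h2⟩)
    · exact Or.inl ⟨h1.symm, h2.symm⟩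
    · exact Or.inr (Or.inl ⟨h1.symm, h2.symm⟩)
    · exact Or.inr (Or.inr ⟨h1.symm, h2.symm⟩)
  loopless := by
    constructor
    rintro a (⟨_, h⟩ | ⟨h, _⟩ | ⟨h, _⟩)
    · exact H.loopless.irrefl _ h
    · exact G.loopless.irrefl _ h
    · exact G.loopless.irrefl _ h

/-- The complete `d`-ary tree of height `h`: vertices are sequences over `Fin d`
of length at most `h` (the root is the empty sequence), and each vertex `l` of
length `< h` has the `d` children `a :: l`. -/
def completeAryTree (d h : ℕ) : SimpleGraph {l : List (Fin d) // l.length ≤ h} :=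
  SimpleGraph.fromRel (fun v w => ∃ a : Fin d, w.val = a :: v.val)

/-!
Order the vertices so that each has at most `d` neighbours before it, and properly colour them
with `d + 1` colours `κ`. Colour an edge `true` when `κ` increases along the order and `false`
otherwise. In a copy of a tree whose vertices have more than `d` children, every non-leaf has a
child placed later in the order; along such an edge `κ` strictly increases in a `true` copy and
strictly decreases in a `false` one, so a root-to-leaf path of length `h > d` would need more than
`d + 1` colours.
-/

variable {α : Type*} {G : SimpleGraph α} {d : ℕ}

theorem Degenerate.induction_on_erase [DecidableEq α] (hG : Degenerate d G) {P : Finset α → Prop}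
    (empty : P ∅)
    (erase : ∀ (s : Finset α) (v : α), v ∈ s → (G.neighborSet v ∩ ↑s).ncard ≤ d →
      P (s.erase v) → P s)
    (s : Finset α) : P s := by
  induction s using Finset.strongInduction with
  | _ s ih =>
    rcases s.eq_empty_or_nonempty with rfl | hs
    · exact empty
    obtain ⟨v, hv, hdeg⟩ := hG s hs
    exact erase s v hv hdeg (ih _ (Finset.erase_ssubset hv))

theorem exists_notMem_image_of_ncard_le {S : Set α} (hS : S.Finite) (hcard : S.ncard ≤ d)
    (κ : α → Fin (d + 1)) : ∃ c, c ∉ κ '' S := by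
  have hlt : (κ '' S).ncard < (Set.univ : Set (Fin (d + 1))).ncard := by
    rw [Set.ncard_univ, Nat.card_eq_fintype_card, Fintype.card_fin]
    exact (Set.ncard_image_le hS).trans_lt (Nat.lt_succ_of_le hcard)
  obtain ⟨c, -, hc⟩ := Set.exists_mem_notMem_of_ncard_lt_ncard hlt
  exact ⟨c, hc⟩

theorem Degenerate.colorable [Fintype α] (hG : Degenerate d G) : G.Colorable (d + 1) := by
  classical
  suffices h : ∀ s : Finset α, ∃ κ : α → Fin (d + 1),
      ∀ u ∈ s, ∀ w ∈ s, G.Adj u w → κ u ≠ κ w by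
    obtain ⟨κ, hκ⟩ := h Finset.univ
    exact ⟨Coloring.mk κ fun huw => hκ _ (Finset.mem_univ _) _ (Finset.mem_univ _) huw⟩
  refine hG.induction_on_erase ⟨fun _ => 0, by simp⟩ ?_
  rintro s v hv hdeg ⟨κ, hκ⟩
  obtain ⟨c, hc⟩ := exists_notMem_image_of_ncard_le (s.finite_toSet.inter_of_right _) hdeg κ
  have hv_ne : ∀ w ∈ s, G.Adj v w → Function.update κ v c w ≠ c := by
    intro w hw hvw
    rw [Function.update_of_ne hvw.ne']
    exact fun h => hc ⟨w, ⟨hvw, hw⟩, h⟩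
  refine ⟨Function.update κ v c, fun u hu w hw huw => ?_⟩
  rcases eq_or_ne u v with rfl | hu'
  · simpa using (hv_ne w hw huw).symm
  rcases eq_or_ne w v with rfl | hw'
  · simpa using hv_ne u hu huw.symm
  simpa [hu', hw'] using hκ u (Finset.mem_erase.2 ⟨hu', hu⟩) w (Finset.mem_erase.2 ⟨hw', hw⟩) huw

theorem Degenerate.exists_ncard_neighborSet_le [Fintype α] (hG : Degenerate d G) :
    ∃ ρ : α → ℕ, ∀ x, (G.neighborSet x ∩ {u | ρ u ≤ ρ x}).ncard ≤ d := by
  classical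
  suffices h : ∀ s : Finset α, ∃ ρ : α → ℕ,
      ∀ x ∈ s, (G.neighborSet x ∩ {u | u ∈ s ∧ ρ u ≤ ρ x}).ncard ≤ d by
    obtain ⟨ρ, hρ⟩ := h Finset.univ
    exact ⟨ρ, fun x => by simpa using hρ x (Finset.mem_univ x)⟩
  refine hG.induction_on_erase ⟨fun _ => 0, by simp⟩ ?_
  rintro s v hv hdeg ⟨ρ, hρ⟩
  set top := (s.erase v).sup ρ + 1
  refine ⟨Function.update ρ v top, fun x hx => ?_⟩
  rcases eq_or_ne x v with rfl | hxv
  · refine (Set.ncard_le_ncard (fun u hu => ?_) (s.finite_toSet.inter_of_right _)).trans hdeg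
    exact ⟨hu.1, hu.2.1⟩
  have hxs : x ∈ s.erase v := Finset.mem_erase.2 ⟨hxv, hx⟩
  refine (Set.ncard_le_ncard ?_ ((s.erase v).finite_toSet.subset fun u hu => hu.2.1)).trans
    (hρ x hxs)
  rintro u ⟨hxu, hus, hux⟩
  rw [Function.update_of_ne hxv] at hux
  have hx_top : ρ x < top := Nat.lt_succ_of_le (Finset.le_sup hxs)
  have huv : u ≠ v := by
    rintro rfl
    rw [Function.update_self] at hux
    omega
  rw [Function.update_of_ne huv] at hux
  exact ⟨hxu, Finset.mem_erase.2 ⟨huv, hus⟩, hux⟩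

def agreementColouring {n : ℕ} (ρ : α → ℕ) (κ : α → Fin n) : Sym2 α → Bool :=
  Sym2.lift ⟨fun x y => decide ((ρ x < ρ y ∧ κ x < κ y) ∨ (ρ y < ρ x ∧ κ y < κ x)),
    fun x y => by simp only [or_comm]⟩

theorem lt_of_agreementColouring_eq {n : ℕ} {ρ : α → ℕ} {κ : α → Fin n} {x y : α} {col : Bool}
    (hρ : ρ x < ρ y) (hκ : κ x ≠ κ y) (hc : agreementColouring ρ κ s(x, y) = col) :
    (if col then κ x else (κ x).rev) < (if col then κ y else (κ y).rev) := by
  simp only [agreementColouring, Sym2.lift_mk] at hc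
  cases col
  · simp only [decide_eq_false_iff_not, not_or, not_and, not_lt] at hc
    simpa [Fin.rev_lt_rev] using lt_of_le_of_ne (hc.1 hρ) hκ.symm
  · simp only [decide_eq_true_eq] at hc
    simpa using hc.resolve_right (fun h => h.1.not_gt hρ) |>.2

theorem exists_lt_of_ncard_le {ι : Type*} [Fintype ι] [Finite α] {ρ : α → ℕ} {x : α}
    (hx : (G.neighborSet x ∩ {u | ρ u ≤ ρ x}).ncard ≤ d) {g : ι → α}
    (hg : Function.Injective g) (hadj : ∀ a, G.Adj x (g a)) (hd : d < Fintype.card ι) :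
    ∃ a, ρ x < ρ (g a) := by
  by_contra! hle
  have hsub : Set.range g ⊆ G.neighborSet x ∩ {u | ρ u ≤ ρ x} := by
    rintro _ ⟨a, rfl⟩
    exact ⟨hadj a, hle a⟩
  have := (Set.ncard_le_ncard hsub).trans hx
  rw [Set.ncard_range_of_injective hg, Nat.card_eq_fintype_card] at this
  omega

theorem completeAryTree_adj_cons {k h : ℕ} (t : {l : List (Fin k) // l.length ≤ h})
    (ht : t.1.length < h) (a : Fin k) : (completeAryTree k h).Adj t ⟨a :: t.1, ht⟩ := by
  rw [completeAryTree, fromRel_adj]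
  refine ⟨fun heq => ?_, Or.inl ⟨a, rfl⟩⟩
  simpa using congrArg (fun s => s.1.length) heq

theorem exists_le_of_copy_completeAryTree [Finite α] {k h : ℕ} {ρ : α → ℕ}
    (hρ : ∀ x, (G.neighborSet x ∩ {u | ρ u ≤ ρ x}).ncard ≤ d) (hdk : d < k)
    (f : {l : List (Fin k) // l.length ≤ h} ↪ α)
    (hf : ∀ u v, (completeAryTree k h).Adj u v → G.Adj (f u) (f v)) (μ : α → ℕ)
    (hμ : ∀ u v, (completeAryTree k h).Adj u v → ρ (f u) < ρ (f v) → μ (f u) < μ (f v)) :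
    ∃ t, h ≤ μ (f t) := by
  suffices hpath : ∀ j ≤ h, ∃ t : {l : List (Fin k) // l.length ≤ h},
      t.1.length = j ∧ j ≤ μ (f t) by
    obtain ⟨t, -, ht⟩ := hpath h le_rfl
    exact ⟨t, ht⟩
  intro j
  induction j with
  | zero => exact fun _ => ⟨⟨[], Nat.zero_le h⟩, rfl, Nat.zero_le _⟩
  | succ j ih =>
    intro hj
    obtain ⟨t, rfl, ht⟩ := ih (Nat.le_of_succ_le hj)
    have hchild_inj : Function.Injective fun a : Fin k => f ⟨a :: t.1, hj⟩ :=
      fun a b hab => List.head_eq_of_cons_eq (congrArg Subtype.val (f.injective hab))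
    obtain ⟨a, ha⟩ := exists_lt_of_ncard_le (hρ (f t)) hchild_inj
      (fun a => hf _ _ (completeAryTree_adj_cons t hj a)) (by simpa using hdk)
    exact ⟨⟨a :: t.1, hj⟩, rfl, ht.trans_lt (hμ _ _ (completeAryTree_adj_cons t hj a) ha)⟩

theorem Degenerate.not_isRamsey_completeAryTree [Fintype α] (hG : Degenerate d G) {k h : ℕ}
    (hk : d < k) (hh : d < h) : ¬ IsRamsey G (completeAryTree k h) := by
  obtain ⟨ρ, hρ⟩ := hG.exists_ncard_neighborSet_le
  obtain ⟨κ⟩ := hG.colorable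
  intro hRamsey
  obtain ⟨col, f, hf⟩ := hRamsey (agreementColouring ρ κ)
  let μ : α → Fin (d + 1) := fun x => if col then κ x else (κ x).rev
  obtain ⟨t, ht⟩ := exists_le_of_copy_completeAryTree hρ hk f (fun u v huv => (hf u v huv).1)
    (fun x => μ x) fun u v huv hlt =>
      lt_of_agreementColouring_eq hlt (κ.valid (hf u v huv).1) (hf u v huv).2
  have := (μ (f t)).isLt
  omega

theorem statement4_general (i : ℕ) (α : Type) [Fintype α] (G : SimpleGraph α)
    (hG : Degenerate (2 ^ i - 1) G) :
    ¬ IsRamsey G (completeAryTree (2 ^ (i + 1)) (2 ^ i)) := by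
  have hpos : 0 < 2 ^ i := Nat.two_pow_pos i
  refine hG.not_isRamsey_completeAryTree ?_ (by omega)
  rw [pow_succ]
  omega

/-- For every integer `i ≥ 1`, every `(2^i - 1)`-degenerate graph `G` is
not Ramsey for the complete `2^(i+1)`-ary tree of height `2^i`. -/
theorem statement4 (i : ℕ) (hi : 1 ≤ i) (α : Type) [Fintype α] (G : SimpleGraph α)
    (hG : Degenerate (2 ^ i - 1) G) :
    ¬ IsRamsey G (completeAryTree (2 ^ (i + 1)) (2 ^ i)) :=
  statement4_general i α G hG
end

section
/- Fix an integer t ≥ 1. Let F be a graph with maximum degree Δ ≥ 1, and let F' be a spanning subgraph of the blowup F(t) such that for every edge vw ∈ E(F) there are at least (1 − 1/(8Δ))·t² edges of F' between I(v) and I(w). Then F' contains a subgraph isomorphic to F. -/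
open SimpleGraph

/-- The blowup `F(t)` of a graph `F`: each vertex `v` is replaced by the independent
set `I(v) = {v} × Fin t` and each edge by a complete bipartite graph. -/
def blowup {α : Type*} (F : SimpleGraph α) (t : ℕ) : SimpleGraph (α × Fin t) where
  Adj a b := F.Adj a.1 b.1
  symm := ⟨fun _ _ h => h.symm⟩
  loopless := ⟨fun _ h => F.loopless.irrefl _ h⟩

/-!
Choose one vertex `(v, g v)` in every class `I(v)`; it suffices to find a choice `g` for which
`F'` contains every edge `(v, g v) (w, g w)` with `vw ∈ E(F)`. This is the symmetric local lemma,
proved by counting. Let `G(S)` be the set of choices realising all edges of `S ⊆ E(F)`; by strong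
induction on `S`, `|G(S ∪ {e})| ≥ (1 - 1/(2Δ)) |G(S)|`. For `e = vw`, fewer than `2Δ` edges of `S`
meet `v` or `w`, so dropping them enlarges `G(S)` by a factor at most `(1 - 1/(2Δ))^(-(2Δ-1)) ≤ 4`.
The remaining edges `S₂` do not constrain `g v` and `g w`, so at most a `1/(8Δ)` fraction of
`G(S₂)` fails `e`, which is at most a `4/(8Δ) = 1/(2Δ)` fraction of `G(S)`.
-/

open Finset Function

theorem one_sub_one_div_two_mul_pos (Δ : ℕ) : (0 : ℝ) < 1 - 1 / (2 * Δ) := by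
  rcases Nat.eq_zero_or_pos Δ with rfl | hΔ
  · simp
  · have : (1 : ℝ) ≤ Δ := by exact_mod_cast hΔ
    rw [sub_pos, div_lt_one (by positivity)]
    linarith

theorem one_fourth_le_one_sub_one_div_two_mul_pow {Δ k : ℕ} (hk : k < 2 * Δ) :
    (1 : ℝ) / 4 ≤ (1 - 1 / (2 * Δ)) ^ k := by
  have hΔ : (1 : ℝ) ≤ Δ := by exact_mod_cast (by omega : 1 ≤ Δ)
  have hm : (0 : ℝ) < 2 * Δ - 1 := by linarith
  have hkm : (k : ℝ) ≤ 2 * Δ - 1 := by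
    have : (k : ℝ) + 1 ≤ 2 * Δ := by exact_mod_cast hk
    linarith
  have hinv : 1 - 1 / (2 * Δ : ℝ) = (1 + 1 / (2 * (Δ : ℝ) - 1))⁻¹ := by
    field_simp [hm.ne']
    ring
  have hpow : (1 + 1 / (2 * Δ - 1 : ℝ)) ^ k ≤ 4 :=
    calc (1 + 1 / (2 * Δ - 1 : ℝ)) ^ k
        ≤ Real.exp (1 / (2 * Δ - 1)) ^ k := by
          gcongr; linarith [Real.add_one_le_exp (1 / (2 * Δ - 1 : ℝ))]
      _ = Real.exp (k / (2 * Δ - 1)) := by rw [← Real.exp_nat_mul, mul_one_div]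
      _ ≤ Real.exp 1 := Real.exp_le_exp.mpr ((div_le_one hm).mpr hkm)
      _ ≤ 4 := by linarith [Real.exp_one_lt_d9]
  rw [hinv, inv_pow, one_div]
  exact inv_anti₀ (by positivity) hpow

theorem pow_card_mul_le_of_forall_insert {ι : Type*} [DecidableEq ι] {f : Finset ι → ℝ} {x : ℝ}
    (hx : 0 ≤ x) {S : Finset ι} (hstep : ∀ V ⊆ S, ∀ a ∈ S, a ∉ V → x * f V ≤ f (insert a V))
    {T U : Finset ι} (hTU : T ∪ U ⊆ S) (hdisj : Disjoint T U) :
    x ^ #T * f U ≤ f (T ∪ U) := by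
  induction T using Finset.induction_on with
  | empty => simp
  | insert a T ha ih =>
    rw [insert_union] at hTU ⊢
    have haU : a ∉ U := disjoint_left.mp hdisj (mem_insert_self a T)
    calc x ^ #(insert a T) * f U = x * (x ^ #T * f U) := by rw [card_insert_of_notMem ha]; ring
      _ ≤ x * f (T ∪ U) :=
          mul_le_mul_of_nonneg_left (ih ((subset_insert _ _).trans hTU)
            (disjoint_of_subset_left (subset_insert _ _) hdisj)) hx
      _ ≤ f (insert a (T ∪ U)) :=
          hstep _ ((subset_insert _ _).trans hTU) a (hTU (mem_insert_self _ _))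
            (by simp [ha, haU])

section

open scoped Classical

variable {α β : Type*} [Fintype α] [Fintype β]

/-- The set `G(S)`: choices of the vertex `(v, g v)` in each class for which `F'` contains every
edge of `S`. -/
noncomputable def goodTransversals (F' : SimpleGraph (α × β)) (S : Finset (Sym2 α)) :
    Finset (α → β) :=
  {g | ↑S ⊆ (F'.comap fun v ↦ (v, g v)).edgeSet}

variable {F' : SimpleGraph (α × β)}

theorem card_goodTransversals_empty :
    #(goodTransversals F' ∅) = Fintype.card β ^ Fintype.card α := by
  simp [goodTransversals]

theorem card_goodTransversals_insert_add (S : Finset (Sym2 α)) (e : Sym2 α) :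
    #(goodTransversals F' (insert e S)) +
      #{g ∈ goodTransversals F' S | e ∉ (F'.comap fun v ↦ (v, g v)).edgeSet} =
      #(goodTransversals F' S) := by
  convert card_filter_add_card_filter_not (s := goodTransversals F' S)
    (fun g ↦ e ∈ (F'.comap fun v ↦ (v, g v)).edgeSet) using 3
  ext g
  simp [goodTransversals, Set.insert_subset_iff, and_comm]

theorem update_mem_goodTransversals {S : Finset (Sym2 α)} {v : α} (hv : ∀ e ∈ S, v ∉ e) {g : α → β}
    (hg : g ∈ goodTransversals F' S) (b : β) : update g v b ∈ goodTransversals F' S := by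
  simp only [goodTransversals, mem_filter, mem_univ, true_and] at hg ⊢
  intro e he
  have hve := hv e he
  induction e using Sym2.ind with
  | _ x y =>
    have hx : x ≠ v := fun h ↦ hve (h ▸ Sym2.mem_mk_left x y)
    have hy : y ≠ v := fun h ↦ hve (h ▸ Sym2.mem_mk_right x y)
    simpa [update_of_ne hx, update_of_ne hy] using hg he

theorem card_filter_not_mem_edgeSet_mul_le {S : Finset (Sym2 α)} {v w : α} (hvw : v ≠ w)
    (hS : ∀ e ∈ S, v ∉ e ∧ w ∉ e) :
    #{g ∈ goodTransversals F' S | s(v, w) ∉ (F'.comap fun v ↦ (v, g v)).edgeSet} *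
        Fintype.card β ^ 2 ≤
      #{p : β × β | ¬F'.Adj (v, p.1) (w, p.2)} * #(goodTransversals F' S) := by
  let φ : (α → β) × β × β → (β × β) × (α → β) :=
    fun q ↦ ((q.1 v, q.1 w), update (update q.1 v q.2.1) w q.2.2)
  let ψ : (β × β) × (α → β) → (α → β) × β × β :=
    fun q ↦ (update (update q.2 v q.1.1) w q.1.2, q.2 v, q.2 w)
  have hψφ : LeftInverse ψ φ := by
    rintro ⟨g, a, b⟩
    simp [φ, ψ, update_of_ne hvw, update_comm hvw.symm, update_idem]
  have := card_le_card_of_injOn φ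
    (s := {g ∈ goodTransversals F' S | s(v, w) ∉ (F'.comap fun v ↦ (v, g v)).edgeSet} ×ˢ univ)
    (t := ({p : β × β | ¬F'.Adj (v, p.1) (w, p.2)} : Finset _) ×ˢ goodTransversals F' S) ?_
    hψφ.injective.injOn
  · simpa [card_product, sq] using this
  rintro ⟨g, a, b⟩ hg
  simp only [coe_product, Set.mem_prod, mem_coe, mem_filter, mem_univ, true_and] at hg ⊢
  refine ⟨by simpa using hg.1.2, ?_⟩
  exact update_mem_goodTransversals (fun e he ↦ (hS e he).2)
    (update_mem_goodTransversals (fun e he ↦ (hS e he).1) hg.1.1 a) b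

theorem goodTransversals_anti {S T : Finset (Sym2 α)} (h : S ⊆ T) :
    goodTransversals F' T ⊆ goodTransversals F' S :=
  monotone_filter_right _ fun _ _ hg ↦ (coe_subset.mpr h).trans hg

omit [Fintype α] in
theorem card_not_adj_le_of_le_ncard_adj {v w : α} {r : ℝ}
    (h : (1 - r) * (Fintype.card β : ℝ) ^ 2 ≤ {p : β × β | F'.Adj (v, p.1) (w, p.2)}.ncard) :
    (#{p : β × β | ¬F'.Adj (v, p.1) (w, p.2)} : ℝ) ≤ r * Fintype.card β ^ 2 := by
  have hsum := card_filter_add_card_filter_not (s := (univ : Finset (β × β)))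
    (fun p ↦ F'.Adj (v, p.1) (w, p.2))
  rw [card_univ, Fintype.card_prod, ← sq] at hsum
  rw [Set.ncard_eq_toFinset_card', Set.toFinset_ofPred] at h
  have : (#{p : β × β | F'.Adj (v, p.1) (w, p.2)} : ℝ) +
      #{p : β × β | ¬F'.Adj (v, p.1) (w, p.2)} = (Fintype.card β : ℝ) ^ 2 := by
    exact_mod_cast hsum
  linarith

theorem card_filter_incident_lt {F : SimpleGraph α} {Δ : ℕ} (hdeg : MaxDegLE F Δ)
    {S : Finset (Sym2 α)} (hS : ↑S ⊆ F.edgeSet) {v w : α} (hvw : F.Adj v w)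
    (hvwS : s(v, w) ∉ S) :
    #{e ∈ S | v ∈ e ∨ w ∈ e} < 2 * Δ := by
  have hdeg' (u : α) : #(F.incidenceFinset u) ≤ Δ := by
    simpa [card_incidenceFinset_eq_degree, Set.ncard_eq_toFinset_card',
      ← card_neighborFinset_eq_degree, neighborFinset_eq_filter] using hdeg u
  have hsub : {e ∈ S | v ∈ e ∨ w ∈ e} ⊆
      (F.incidenceFinset v ∪ F.incidenceFinset w).erase s(v, w) := by
    intro e he
    obtain ⟨heS, hve⟩ := mem_filter.mp he
    rw [mem_erase, mem_union, mem_incidenceFinset, mem_incidenceFinset]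
    exact ⟨ne_of_mem_of_not_mem heS hvwS, hve.imp (⟨hS heS, ·⟩) (⟨hS heS, ·⟩)⟩
  have hmem : s(v, w) ∈ F.incidenceFinset v ∪ F.incidenceFinset w :=
    mem_union_left _ ((F.mem_incidenceFinset _ _).mpr ⟨hvw, Sym2.mem_mk_left v w⟩)
  have := card_le_card hsub
  have := card_union_le (F.incidenceFinset v) (F.incidenceFinset w)
  have := card_pos.mpr ⟨_, hmem⟩
  rw [card_erase_of_mem hmem] at *
  have := hdeg' v
  have := hdeg' w
  omega

theorem mul_card_goodTransversals_le_card_insert [Nonempty β] {F : SimpleGraph α}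
    {Δ : ℕ} (hdeg : MaxDegLE F Δ)
    (hmiss : ∀ v w, F.Adj v w →
      (#{p : β × β | ¬F'.Adj (v, p.1) (w, p.2)} : ℝ) ≤ 1 / (8 * Δ) * Fintype.card β ^ 2)
    (S : Finset (Sym2 α)) (hS : ↑S ⊆ F.edgeSet) {e : Sym2 α} (he : e ∈ F.edgeSet) (heS : e ∉ S) :
    (1 - 1 / (2 * Δ)) * (#(goodTransversals F' S) : ℝ) ≤ #(goodTransversals F' (insert e S)) := by
  induction S using Finset.strongInduction generalizing e with
  | H S ih =>
  induction e using Sym2.ind with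
  | _ v w =>
  have hvw : F.Adj v w := he
  set x : ℝ := 1 - 1 / (2 * Δ) with hx
  set S₁ := {e ∈ S | v ∈ e ∨ w ∈ e}
  set S₂ := {e ∈ S | ¬(v ∈ e ∨ w ∈ e)}
  have hsplit : S₁ ∪ S₂ = S := filter_union_filter_not_eq _ _
  have hdrop : x ^ #S₁ * #(goodTransversals F' S₂) ≤ #(goodTransversals F' S) := by
    refine hsplit ▸ pow_card_mul_le_of_forall_insert (f := fun S ↦ (#(goodTransversals F' S) : ℝ))
      (one_sub_one_div_two_mul_pos Δ).le
      (fun V hV a ha haV ↦ ?_) hsplit.le (disjoint_filter_filter_not _ _ _)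
    exact ih V ((ssubset_iff_of_subset hV).mpr ⟨a, ha, haV⟩) ((coe_subset.mpr hV).trans hS)
      (hS ha) haV
  have hS₁ := card_filter_incident_lt hdeg hS hvw heS
  have hquarter : 1 / 4 ≤ x ^ #S₁ := one_fourth_le_one_sub_one_div_two_mul_pow hS₁
  have hbad := card_le_card (filter_subset_filter
    (fun g ↦ s(v, w) ∉ (F'.comap fun v ↦ (v, g v)).edgeSet)
    (goodTransversals_anti (filter_subset _ S) : goodTransversals F' S ⊆ goodTransversals F' S₂))
  have hindep := card_filter_not_mem_edgeSet_mul_le (F' := F') hvw.ne (S := S₂)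
    (fun e he ↦ not_or.mp (mem_filter.mp he).2)
  have hcount := card_goodTransversals_insert_add (F' := F') S s(v, w)
  have hΔ : (0 : ℝ) < Δ := by exact_mod_cast (by omega : 0 < Δ)
  have hβ : (0 : ℝ) < Fintype.card β ^ 2 := by have := Fintype.card_pos (α := β); positivity
  rw [← Nat.cast_le (α := ℝ)] at hbad hindep
  rw [← Nat.cast_inj (R := ℝ)] at hcount
  push_cast at hindep hcount
  have hbad₂ : (#{g ∈ goodTransversals F' S₂ | s(v, w) ∉ (F'.comap fun v ↦ (v, g v)).edgeSet} : ℝ) ≤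
      1 / (8 * Δ) * #(goodTransversals F' S₂) := by
    refine le_of_mul_le_mul_right ?_ hβ
    calc _ ≤ _ := hindep
      _ ≤ 1 / (8 * Δ) * Fintype.card β ^ 2 * #(goodTransversals F' S₂) := by
          gcongr; exact hmiss v w hvw
      _ = _ := by ring
  have hfour : (#(goodTransversals F' S₂) : ℝ) ≤ 4 * #(goodTransversals F' S) := by
    nlinarith [Nat.cast_nonneg (α := ℝ) #(goodTransversals F' S₂)]
  calc x * #(goodTransversals F' S)
        = #(goodTransversals F' S) - 1 / (8 * Δ) * (4 * #(goodTransversals F' S)) := by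
          rw [hx]; field_simp; ring
    _ ≤ #(goodTransversals F' S) - 1 / (8 * Δ) * #(goodTransversals F' S₂) := by gcongr
    _ ≤ #(goodTransversals F' (insert s(v, w) S)) := by linarith

theorem exists_le_comap_of_card_not_adj_le [Nonempty β] {F : SimpleGraph α}
    {Δ : ℕ} (hdeg : MaxDegLE F Δ)
    (hmiss : ∀ v w, F.Adj v w →
      (#{p : β × β | ¬F'.Adj (v, p.1) (w, p.2)} : ℝ) ≤ 1 / (8 * Δ) * Fintype.card β ^ 2) :
    ∃ g : α → β, F ≤ F'.comap fun v ↦ (v, g v) := by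
  have hE := pow_card_mul_le_of_forall_insert (f := fun S ↦ (#(goodTransversals F' S) : ℝ))
    (one_sub_one_div_two_mul_pos Δ).le
    (fun V hV a ha haV ↦ mul_card_goodTransversals_le_card_insert hdeg hmiss V
      (by simpa using (coe_subset.mpr hV).trans (coe_edgeFinset F).subset)
      (by simpa using ha) haV)
    (union_empty F.edgeFinset).subset (disjoint_empty_right _)
  rw [union_empty, card_goodTransversals_empty] at hE
  have hpos : (0 : ℝ) < #(goodTransversals F' F.edgeFinset) :=
    hE.trans_lt' (by have := one_sub_one_div_two_mul_pos Δ; positivity)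
  obtain ⟨g, hg⟩ := card_pos.mp (by exact_mod_cast hpos)
  refine ⟨g, edgeSet_subset_edgeSet.mp ?_⟩
  simpa [goodTransversals] using hg

end

theorem statement8_general {α : Type} [Fintype α] (t Δ : ℕ) (ht : 1 ≤ t)
    (F : SimpleGraph α) (hdeg : MaxDegLE F Δ)
    (F' : SimpleGraph (α × Fin t))
    (hedges : ∀ v w, F.Adj v w →
      (1 - 1 / (8 * (Δ : ℝ))) * (t : ℝ) ^ 2 ≤
        (({p : Fin t × Fin t | F'.Adj (v, p.1) (w, p.2)}.ncard : ℝ))) :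
    HasCopy F' F := by
  have : Nonempty (Fin t) := Fin.pos_iff_nonempty.mp ht
  obtain ⟨g, hg⟩ := exists_le_comap_of_card_not_adj_le (F' := F') hdeg fun v w hvw ↦
    card_not_adj_le_of_le_ncard_adj (by simpa using hedges v w hvw)
  exact ⟨⟨fun v ↦ (v, g v), fun _ _ h ↦ congrArg Prod.fst h⟩, fun _ _ h ↦ hg h⟩

/-- Fix `t ≥ 1`. Let `F` be a graph with maximum degree at most `Δ`
(`Δ ≥ 1`) and let `F'` be a spanning subgraph of the blowup `F(t)` such that for
every edge `vw` of `F` there are at least `(1 - 1/(8Δ)) t²` edges of `F'` between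
`I(v)` and `I(w)`. Then `F'` contains a subgraph isomorphic to `F`. -/
theorem statement8 {α : Type} [Fintype α] (t Δ : ℕ) (ht : 1 ≤ t) (hΔ : 1 ≤ Δ)
    (F : SimpleGraph α) (hdeg : MaxDegLE F Δ)
    (F' : SimpleGraph (α × Fin t)) (hsub : F' ≤ blowup F t)
    (hedges : ∀ v w, F.Adj v w →
      (1 - 1 / (8 * (Δ : ℝ))) * (t : ℝ) ^ 2 ≤
        (({p : Fin t × Fin t | F'.Adj (v, p.1) (w, p.2)}.ncard : ℝ))) :
    HasCopy F' F :=
  statement8_general t Δ ht F hdeg F' hedges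
end

section
/- Let n, d ≥ 1 be integers and let H be a non-empty graph such that for every set X ⊆ V(H) with 1 ≤ |X| ≤ 2n − 2 one has |Γ_H(X)| ≥ (d+1)·|X|. Then H contains a copy of every tree in 𝒯_{n,d}. -/
open SimpleGraph

/-!
Number the tree's vertices `0, …, n - 1` so that each vertex `i ≥ 1` has its parent `p i` among
the earlier ones, and embed them into `H` one at a time (Friedman–Pippenger). Let `U` be the image
of the vertices embedded so far. The invariant is that every set `X` of at most `2n - 2` host
vertices has at least `d |X \ U|` neighbours outside `U`, plus one more for each child of an
embedded vertex in `X` that is still to be embedded. The expansion hypothesis gives this after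
the first vertex. Call `X` critical when equality holds. Critical sets have at most `|U|`
elements, and since `|Γ(·) \ U|` is submodular they are closed under union. Suppose no
neighbour `w` of the parent's image could take the next vertex. Then every such `w` has a
neighbour in some critical set that misses the parent's image. Adding the parent's image to
the union of these critical sets gives a set that breaks the invariant. Finally, a tree on `n`
vertices has exactly `n - 1` edges, so these `n - 1` parent edges are all of them.
-/

open Finset

theorem Set.InjOn.update_nat {γ : Type*} {f : ℕ → γ} {m : ℕ} (hf : Set.InjOn f (Set.Iio m))
    {w : γ} (hw : w ∉ f '' Set.Iio m) :
    Set.InjOn (Function.update f m w) (Set.Iio (m + 1)) := by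
  intro i hi j hj hij
  simp only [Set.mem_Iio] at hi hj
  rcases Nat.lt_succ_iff_lt_or_eq.1 hi with hi | rfl <;>
    rcases Nat.lt_succ_iff_lt_or_eq.1 hj with hj | rfl
  · rw [Function.update_of_ne hi.ne, Function.update_of_ne hj.ne] at hij
    exact hf hi hj hij
  · rw [Function.update_of_ne hi.ne, Function.update_self] at hij
    exact absurd ⟨i, hi, hij⟩ hw
  · rw [Function.update_self, Function.update_of_ne hj.ne] at hij
    exact absurd ⟨j, hj, hij.symm⟩ hw
  · rfl

theorem Finset.card_sdiff_union_add_card_sdiff_inter {α : Type*} [DecidableEq α]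
    (X Y U : Finset α) :
    #((X ∪ Y) \ U) + #((X ∩ Y) \ U) = #(X \ U) + #(Y \ U) := by
  have h : (X ∩ Y) \ U = X \ U ∩ (Y \ U) := by
    ext
    simp only [mem_sdiff, mem_inter]
    tauto
  rw [union_sdiff_distrib, h, card_union_add_card_inter]

theorem Finset.card_sdiff_eq_card_sdiff_insert_add {α : Type*} [DecidableEq α] {A U : Finset α}
    {w : α} (hw : w ∉ U) :
    #(A \ U) = #(A \ insert w U) + if w ∈ A then 1 else 0 := by
  rw [sdiff_insert]
  split_ifs with hwA
  · exact (card_erase_add_one (mem_sdiff.2 ⟨hwA, hw⟩)).symm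
  · rw [erase_eq_of_notMem fun h => hwA (mem_sdiff.1 h).1, add_zero]

section ParentOrder

variable {β : Type*}

def SimpleGraph.IsParentOrder (T : SimpleGraph β) (e : ℕ → β) (p : ℕ → ℕ) (n : ℕ) : Prop :=
  ∀ i ∈ Ico 1 n, p i < i ∧ T.Adj (e (p i)) (e i)

variable {T : SimpleGraph β} {e : ℕ → β} {p : ℕ → ℕ} {n : ℕ}

theorem SimpleGraph.Connected.exists_isParentOrder_of_le [Fintype β] (hT : T.Connected) {k : ℕ}
    (hk : 1 ≤ k) (hkβ : k ≤ Fintype.card β) :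
    ∃ (e : ℕ → β) (p : ℕ → ℕ), Set.InjOn e (Set.Iio k) ∧ T.IsParentOrder e p k := by
  classical
  induction k, hk using Nat.le_induction with
  | base =>
    exact ⟨fun _ => hT.nonempty.some, 0, fun i hi j hj _ => by simp_all,
      fun i hi => by simp at hi⟩
  | succ k hk ih =>
    obtain ⟨e, p, he, hpar⟩ := ih (by omega)
    obtain ⟨v, -, hv⟩ := exists_mem_notMem_of_card_lt_card (s := (range k).image e)
      (t := univ) (card_image_le.trans_lt (by rw [card_range, card_univ]; omega))
    obtain ⟨dt, -, hfst, hsnd⟩ := (hT.preconnected (e 0) v).some.exists_boundary_dart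
      ((range k).image e : Set β) (by simpa using ⟨0, hk, rfl⟩) (by simpa using hv)
    obtain ⟨j, hj, hje⟩ : ∃ j < k, e j = dt.fst := by simpa using hfst
    refine ⟨Function.update e k dt.snd, Function.update p k j,
      he.update_nat (by simpa using hsnd), fun i hi => ?_⟩
    obtain ⟨hi1, hi⟩ := mem_Ico.1 hi
    rcases Nat.lt_succ_iff_lt_or_eq.1 hi with hi | rfl
    · obtain ⟨hpi, hadj⟩ := hpar i (mem_Ico.2 ⟨hi1, hi⟩)
      simp only [Function.update_of_ne hi.ne, Function.update_of_ne (show p i ≠ k by omega)]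
      exact ⟨hpi, hadj⟩
    · simp only [Function.update_self, Function.update_of_ne hj.ne, hje]
      exact ⟨hj, dt.adj⟩

theorem SimpleGraph.Connected.exists_isParentOrder [Fintype β] (hT : T.Connected) :
    ∃ (e : ℕ → β) (p : ℕ → ℕ),
      Set.BijOn e (Set.Iio (Fintype.card β)) Set.univ ∧ T.IsParentOrder e p (Fintype.card β) := by
  classical
  have := hT.nonempty
  obtain ⟨e, p, he, hpar⟩ := hT.exists_isParentOrder_of_le Fintype.card_pos le_rfl
  refine ⟨e, p, ⟨fun i _ => Set.mem_univ _, he, fun b _ => ?_⟩, hpar⟩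
  have himage : (range (Fintype.card β)).image e = univ :=
    eq_univ_of_card _ (by rw [card_image_of_injOn (by simpa), card_range])
  obtain ⟨i, hi, rfl⟩ := mem_image.1 (himage.symm ▸ mem_univ b)
  exact ⟨i, by simpa using hi, rfl⟩

theorem SimpleGraph.IsParentOrder.injOn_sym2 (he : Set.InjOn e (Set.Iio n))
    (hpar : T.IsParentOrder e p n) :
    Set.InjOn (fun i => s(e (p i), e i)) (Ico 1 n) := by
  intro i hi j hj hij
  have hpi := (hpar i hi).1
  have hpj := (hpar j hj).1
  simp only [coe_Ico, Set.mem_Ico] at hi hj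
  rcases Sym2.eq_iff.1 hij with ⟨-, h⟩ | ⟨h₁, h₂⟩
  · exact he hi.2 hj.2 h
  · have := he (show p i < n by omega) hj.2 h₁
    have := he hi.2 (show p j < n by omega) h₂
    omega

theorem SimpleGraph.IsTree.exists_parent_eq_of_adj [Fintype β] (hT : T.IsTree)
    (he : Set.InjOn e (Set.Iio (Fintype.card β))) (hpar : T.IsParentOrder e p (Fintype.card β))
    {u v : β} (huv : T.Adj u v) :
    ∃ i ∈ Ico 1 (Fintype.card β), s(e (p i), e i) = s(u, v) := by
  classical
  set F := (Ico 1 (Fintype.card β)).image fun i => s(e (p i), e i)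
  have hF : F ⊆ T.edgeFinset := by
    intro x hx
    obtain ⟨i, hi, rfl⟩ := mem_image.1 hx
    exact mem_edgeFinset.2 (hpar i hi).2
  have hcard : #T.edgeFinset ≤ #F := by
    rw [card_image_of_injOn (hpar.injOn_sym2 he), Nat.card_Ico]
    have := hT.card_edgeFinset
    omega
  have huvF : s(u, v) ∈ F := by
    rw [eq_of_subset_of_card_le hF hcard, mem_edgeFinset]
    exact huv
  exact mem_image.1 huvF

theorem SimpleGraph.IsParentOrder.card_children_add_le [Finite β] (he : Set.InjOn e (Set.Iio n))
    (hpar : T.IsParentOrder e p n) {i : ℕ} (hi : i < n) :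
    #{j ∈ Ico 1 n | p j = i} + (if i = 0 then 0 else 1) ≤ (T.neighborSet (e i)).ncard := by
  have hle : ∀ K : Finset ℕ, (∀ j ∈ K, j < n ∧ T.Adj (e i) (e j)) →
      #K ≤ (T.neighborSet (e i)).ncard := fun K hK =>
    (Set.ncard_coe_finset K).symm.trans_le (Set.ncard_le_ncard_of_injOn e
      (fun j hj => (hK j hj).2) (he.mono fun j hj => (hK j hj).1) (Set.toFinite _))
  have hchildren : ∀ j ∈ ({j ∈ Ico 1 n | p j = i} : Finset ℕ), j < n ∧ T.Adj (e i) (e j) := by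
    intro j hj
    obtain ⟨hj, hpj⟩ := mem_filter.1 hj
    exact ⟨(mem_Ico.1 hj).2, hpj ▸ (hpar j hj).2⟩
  split_ifs with hi0
  · exact hle _ hchildren
  · obtain ⟨hpi, hadj⟩ := hpar i (mem_Ico.2 ⟨by omega, hi⟩)
    have hnot : p i ∉ ({j ∈ Ico 1 n | p j = i} : Finset ℕ) := by
      intro h
      obtain ⟨h, hpp⟩ := mem_filter.1 h
      have := (hpar (p i) h).1
      omega
    rw [← card_insert_of_notMem hnot]
    refine hle _ fun j hj => ?_
    rcases mem_insert.1 hj with rfl | hj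
    · exact ⟨by omega, hadj.symm⟩
    · exact hchildren j hj

theorem SimpleGraph.IsParentOrder.hasCopy {α : Type*} {H : SimpleGraph α} {g : ℕ → α}
    (hH : H.IsParentOrder g p n) (hg : Set.InjOn g (Set.Iio n))
    (he : Set.BijOn e (Set.Iio n) Set.univ)
    (hT : ∀ ⦃u v⦄, T.Adj u v → ∃ i ∈ Ico 1 n, s(e (p i), e i) = s(u, v)) : HasCopy H T := by
  set idx := Function.invFunOn e (Set.Iio n)
  have hinv := he.invOn_invFunOn
  have hidx : ∀ b, idx b < n := fun b => he.surjOn.mapsTo_invFunOn (Set.mem_univ b)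
  have hidx_e : ∀ i < n, idx (e i) = i := fun i hi => hinv.1 hi
  refine ⟨⟨g ∘ idx, fun a b hab => ?_⟩, fun u v huv => ?_⟩
  · rw [← hinv.2 (Set.mem_univ a), ← hinv.2 (Set.mem_univ b)]
    exact congrArg e (hg (hidx a) (hidx b) hab)
  · obtain ⟨i, hi, hs⟩ := hT huv
    obtain ⟨hpi, hadj⟩ := hH i hi
    have hin := (mem_Ico.1 hi).2
    show H.Adj (g (idx u)) (g (idx v))
    rcases Sym2.eq_iff.1 hs with ⟨rfl, rfl⟩ | ⟨rfl, rfl⟩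
    · rwa [hidx_e _ hin, hidx_e (p i) (by omega)]
    · rw [hidx_e _ hin, hidx_e (p i) (by omega)]
      exact hadj.symm

end ParentOrder

namespace FriedmanPippenger

/- The tree has vertices `0, …, n - 1`, vertex `i ≥ 1` having parent `p i < i`; the vertices
`0, …, m - 1` are already embedded, vertex `i` at `g i`. -/
variable {α : Type*} [DecidableEq α] (p : ℕ → ℕ) (n d : ℕ)

def pending (m i : ℕ) : ℕ := #{j ∈ Ico m n | p j = i}

def demand (g : ℕ → α) (m : ℕ) (X : Finset α) : ℕ :=
  ∑ i ∈ range m, if g i ∈ X then pending p n m i else 0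

def placed (g : ℕ → α) (m : ℕ) : Finset α := (range m).image g

lemma apply_mem_placed {g : ℕ → α} {i m : ℕ} (h : i < m) : g i ∈ placed g m :=
  mem_image_of_mem g (mem_range.2 h)

lemma placed_update (g : ℕ → α) (m : ℕ) (w : α) :
    placed (Function.update g m w) (m + 1) = insert w (placed g m) := by
  rw [placed, range_add_one, image_insert, Function.update_self]
  exact congrArg _ (image_congr fun i hi => Function.update_of_ne (mem_range.1 hi).ne _ _)

variable (H : SimpleGraph α) [H.LocallyFinite]

def nbhd (X : Finset α) : Finset α := X.biUnion (H.neighborFinset ·)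

def IsExpanding (k c : ℕ) : Prop :=
  ∀ X : Finset α, 1 ≤ #X → #X ≤ k → c * #X ≤ #(nbhd H X)

def IsGood (g : ℕ → α) (m : ℕ) : Prop :=
  ∀ X : Finset α, #X ≤ 2 * n - 2 →
    d * #(X \ placed g m) + demand p n g m X ≤ #(nbhd H X \ placed g m)

def IsCritical (g : ℕ → α) (m : ℕ) (X : Finset α) : Prop :=
  #X ≤ m ∧ #(nbhd H X \ placed g m) ≤ d * #(X \ placed g m) + demand p n g m X

variable {p n d H}

lemma pending_anti {m m' : ℕ} (h : m ≤ m') (i : ℕ) : pending p n m' i ≤ pending p n m i :=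
  card_le_card (filter_subset_filter _ (Ico_subset_Ico_left h))

lemma pending_eq_pending_succ_add {m : ℕ} (hm : m < n) (i : ℕ) :
    pending p n m i = pending p n (m + 1) i + if p m = i then 1 else 0 := by
  rw [pending, pending, ← insert_Ico_add_one_left_eq_Ico hm, filter_insert]
  split_ifs
  · exact card_insert_of_notMem (by simp)
  · rfl

lemma demand_union_add_demand_inter (g : ℕ → α) (m : ℕ) (X Y : Finset α) :
    demand p n g m (X ∪ Y) + demand p n g m (X ∩ Y) = demand p n g m X + demand p n g m Y := by
  simp only [demand, ← sum_add_distrib]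
  refine sum_congr rfl fun i _ => ?_
  by_cases hX : g i ∈ X <;> by_cases hY : g i ∈ Y <;> simp [hX, hY]

lemma demand_update_add {g : ℕ → α} {m : ℕ} (hm : m < n) (hpm : p m < m) (w : α)
    (X : Finset α) :
    demand p n (Function.update g m w) (m + 1) X + (if g (p m) ∈ X then 1 else 0) =
      demand p n g m X + if w ∈ X then pending p n (m + 1) m else 0 := by
  have hsplit : ∀ i ∈ range m, (if g i ∈ X then pending p n m i else 0) =
      (if Function.update g m w i ∈ X then pending p n (m + 1) i else 0) +
        if p m = i then (if g i ∈ X then 1 else 0) else 0 := fun i hi => by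
    rw [Function.update_of_ne (mem_range.1 hi).ne]
    by_cases h1 : g i ∈ X <;> by_cases h2 : p m = i <;>
      simp [h1, h2, pending_eq_pending_succ_add hm i]
  rw [demand, demand, sum_range_succ, Function.update_self, sum_congr rfl hsplit,
    sum_add_distrib, sum_ite_eq, if_pos (mem_range.2 hpm)]
  ring

lemma demand_add_le {g : ℕ → α} {m : ℕ} (hg : Set.InjOn g (Set.Iio m))
    (hpend : ∀ i < m, pending p n m i ≤ d) (X : Finset α) :
    d * #(X \ placed g m) + demand p n g m X ≤ d * #X := by
  have hsum : demand p n g m X ≤ #{i ∈ range m | g i ∈ X} * d := by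
    rw [demand, ← sum_filter]
    exact sum_le_card_nsmul _ _ _ fun i hi => hpend i (by simp_all)
  have hcard : #{i ∈ range m | g i ∈ X} ≤ #(X ∩ placed g m) :=
    card_le_card_of_injOn g
      (fun i hi => by
        simp only [coe_filter, mem_range, Set.mem_ofPred_eq] at hi
        exact mem_inter.2 ⟨hi.2, apply_mem_placed hi.1⟩)
      (fun i hi j hj => by
        simp only [coe_filter, mem_range, Set.mem_ofPred_eq] at hi hj
        exact hg hi.1 hj.1)
  have := card_sdiff_add_card_inter X (placed g m)
  nlinarith

lemma nbhd_mono {X Y : Finset α} (h : X ⊆ Y) : nbhd H X ⊆ nbhd H Y :=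
  biUnion_subset_biUnion_of_subset_left _ h

lemma card_nbhd_sdiff_union_add_le (X Y U : Finset α) :
    #(nbhd H (X ∪ Y) \ U) + #(nbhd H (X ∩ Y) \ U) ≤ #(nbhd H X \ U) + #(nbhd H Y \ U) := by
  have hinter : nbhd H (X ∩ Y) \ U ⊆ (nbhd H X \ U) ∩ (nbhd H Y \ U) := fun v hv =>
    mem_inter.2 ⟨sdiff_subset_sdiff (nbhd_mono inter_subset_left) subset_rfl hv,
      sdiff_subset_sdiff (nbhd_mono inter_subset_right) subset_rfl hv⟩
  have hunion : nbhd H (X ∪ Y) \ U = nbhd H X \ U ∪ nbhd H Y \ U := by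
    rw [nbhd, union_biUnion, union_sdiff_distrib]
    rfl
  rw [hunion, ← card_union_add_card_inter (nbhd H X \ U)]
  exact Nat.add_le_add_left (card_le_card hinter) _

lemma card_add_le_of_isExpanding {k : ℕ} (hexp : IsExpanding H k (d + 1)) {g : ℕ → α} {m : ℕ}
    (hg : Set.InjOn g (Set.Iio m)) (hpend : ∀ i < m, pending p n m i ≤ d)
    {X : Finset α} (hX : X.Nonempty) (hXk : #X ≤ k) :
    #X + (d * #(X \ placed g m) + demand p n g m X) ≤ #(nbhd H X \ placed g m) + m := by
  have h1 := hexp X hX.card_pos hXk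
  have h2 := demand_add_le hg hpend X
  have h3 : #(nbhd H X) ≤ #(nbhd H X \ placed g m) + #(placed g m) :=
    card_le_card_sdiff_add_card
  have h4 : #(placed g m) ≤ m := card_image_le.trans (card_range m).le
  nlinarith

lemma isGood_const (hexp : IsExpanding H (2 * n - 2) (d + 1)) (hroot : pending p n 1 0 ≤ d)
    (a : α) : IsGood p n d H (fun _ => a) 1 := by
  intro X hX
  rcases X.eq_empty_or_nonempty with rfl | hne
  · simp [demand, nbhd]
  · have := card_add_le_of_isExpanding hexp (g := fun _ => a) (m := 1)
      (fun i hi j hj _ => by simp_all) (fun i hi => by rwa [Nat.lt_one_iff.1 hi]) hne hX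
    have := hne.card_pos
    omega

lemma isCritical_of_le (hexp : IsExpanding H (2 * n - 2) (d + 1)) {g : ℕ → α} {m : ℕ}
    (hg : Set.InjOn g (Set.Iio m)) (hpend : ∀ i < m, pending p n m i ≤ d) {X : Finset α}
    (hX : #X ≤ 2 * n - 2)
    (htight : #(nbhd H X \ placed g m) ≤ d * #(X \ placed g m) + demand p n g m X) :
    IsCritical p n d H g m X := by
  refine ⟨?_, htight⟩
  rcases X.eq_empty_or_nonempty with rfl | hne
  · simp
  · have := card_add_le_of_isExpanding hexp hg hpend hne hX
    omega

lemma isCritical_empty (g : ℕ → α) (m : ℕ) : IsCritical p n d H g m ∅ := by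
  simp [IsCritical, nbhd]

lemma IsCritical.union (hexp : IsExpanding H (2 * n - 2) (d + 1)) {g : ℕ → α} {m : ℕ}
    (hg : Set.InjOn g (Set.Iio m)) (hpend : ∀ i < m, pending p n m i ≤ d) (hm : m < n)
    (hgood : IsGood p n d H g m) {X Y : Finset α}
    (hX : IsCritical p n d H g m X) (hY : IsCritical p n d H g m Y) :
    IsCritical p n d H g m (X ∪ Y) := by
  obtain ⟨hXm, hXtight⟩ := hX
  obtain ⟨hYm, hYtight⟩ := hY
  have hinter := hgood (X ∩ Y) ((card_le_card inter_subset_left).trans (by omega))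
  have hsub := card_nbhd_sdiff_union_add_le (H := H) X Y (placed g m)
  have hmod := congrArg (d * ·) (card_sdiff_union_add_card_sdiff_inter X Y (placed g m))
  have hdem := demand_union_add_demand_inter (p := p) (n := n) g m X Y
  simp only [mul_add] at hmod
  exact isCritical_of_le hexp hg hpend ((card_union_le X Y).trans (by omega)) (by omega)

lemma exists_isCritical_of_not_isGood_update (hexp : IsExpanding H (2 * n - 2) (d + 1))
    {g : ℕ → α} {m : ℕ} (hg : Set.InjOn g (Set.Iio m)) (hpend : ∀ i < m, pending p n m i ≤ d)
    (hm : m < n) (hpm : p m < m) (hchild : pending p n (m + 1) m + 1 ≤ d)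
    (hgood : IsGood p n d H g m) {w : α} (hw : w ∉ placed g m)
    (hbad : ¬ IsGood p n d H (Function.update g m w) (m + 1)) :
    ∃ X, IsCritical p n d H g m X ∧ w ∈ nbhd H X ∧ g (p m) ∉ X := by
  simp only [IsGood, not_forall, not_le, placed_update] at hbad
  obtain ⟨X, hX, hlt⟩ := hbad
  have hold := hgood X hX
  have hdem := demand_update_add hm hpm w X (g := g)
  have hXU := card_sdiff_eq_card_sdiff_insert_add (A := X) hw
  have hNU := card_sdiff_eq_card_sdiff_insert_add (A := nbhd H X) hw
  rw [hXU, mul_add] at hold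
  have hwX : w ∉ X := fun h => by
    simp only [h, if_true] at hold hdem
    split_ifs at hdem hNU <;> omega
  simp only [hwX, if_false] at hold hdem
  have hwN : w ∈ nbhd H X := by
    by_contra h
    simp only [h, if_false] at hNU
    split_ifs at hdem <;> omega
  have hvX : g (p m) ∉ X := fun h => by
    simp only [h, hwN, if_true] at hdem hNU
    omega
  refine ⟨X, isCritical_of_le hexp hg hpend hX ?_, hwN, hvX⟩
  simp only [hvX, hwN, if_true, if_false] at hdem hNU
  rw [hXU, if_neg hwX, add_zero]
  omega

lemma exists_isGood_update (hexp : IsExpanding H (2 * n - 2) (d + 1))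
    {g : ℕ → α} {m : ℕ} (hg : Set.InjOn g (Set.Iio m)) (hpend : ∀ i < m, pending p n m i ≤ d)
    (hm : m < n) (hpm : p m < m) (hchild : pending p n (m + 1) m + 1 ≤ d)
    (hgood : IsGood p n d H g m) :
    ∃ w ∈ H.neighborFinset (g (p m)) \ placed g m,
      IsGood p n d H (Function.update g m w) (m + 1) := by
  by_contra! hbad
  choose! X hXcrit hwX hvX using fun w (hw : w ∈ H.neighborFinset (g (p m)) \ placed g m) =>
    exists_isCritical_of_not_isGood_update hexp hg hpend hm hpm hchild hgood
      (mem_sdiff.1 hw).2 (hbad w hw)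
  set Y := (H.neighborFinset (g (p m)) \ placed g m).sup X
  have hY : IsCritical p n d H g m Y :=
    sup_induction (isCritical_empty g m) (fun _ h₁ _ h₂ => h₁.union hexp hg hpend hm hgood h₂)
      hXcrit
  have hvY : g (p m) ∉ Y := by
    simp only [Y, mem_sup, not_exists, not_and]
    exact hvX
  have hN : nbhd H (insert (g (p m)) Y) \ placed g m ⊆ nbhd H Y \ placed g m := by
    intro u hu
    rw [nbhd, biUnion_insert, union_sdiff_distrib, mem_union] at hu
    rcases hu with hu | hu
    · exact mem_sdiff.2 ⟨nbhd_mono (le_sup hu) (hwX u hu), (mem_sdiff.1 hu).2⟩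
    · exact hu
  have hdem : demand p n g m Y + pending p n m (p m) ≤ demand p n g m (insert (g (p m)) Y) := by
    have hsplit : pending p n m (p m) =
        ∑ i ∈ range m, if p m = i then pending p n m i else 0 := by
      rw [sum_ite_eq, if_pos (mem_range.2 hpm)]
    rw [hsplit, demand, demand, ← sum_add_distrib]
    refine sum_le_sum fun i _ => ?_
    by_cases hi : p m = i
    · subst hi
      simp [hvY]
    · by_cases h : g i ∈ Y <;> simp [hi, h]
  have hpos : 1 ≤ pending p n m (p m) := card_pos.2 ⟨m, by simp [hm]⟩
  have hZ := hgood (insert (g (p m)) Y) ((card_insert_le _ _).trans (by have := hY.1; omega))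
  rw [insert_sdiff_of_mem _ (apply_mem_placed hpm)] at hZ
  have := card_le_card hN
  have := hY.2
  omega

theorem exists_injOn_isParentOrder [Nonempty α] (hexp : IsExpanding H (2 * n - 2) (d + 1))
    (hn : 1 ≤ n) (hp : ∀ i ∈ Ico 1 n, p i < i)
    (hdeg : ∀ i < n, pending p n 1 i + (if i = 0 then 0 else 1) ≤ d) :
    ∃ g : ℕ → α, Set.InjOn g (Set.Iio n) ∧ H.IsParentOrder g p n := by
  have hpend : ∀ m ≥ 1, m ≤ n → ∀ i < m, pending p n m i ≤ d := fun m hm hmn i hi =>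
    (pending_anti hm i).trans (by have := hdeg i (by omega); omega)
  suffices ∀ m ≥ 1, m ≤ n → ∃ g : ℕ → α, Set.InjOn g (Set.Iio m) ∧
      (∀ i ∈ Ico 1 m, H.Adj (g (p i)) (g i)) ∧ IsGood p n d H g m by
    obtain ⟨g, hg, hadj, -⟩ := this n hn le_rfl
    exact ⟨g, hg, fun i hi => ⟨hp i hi, hadj i hi⟩⟩
  intro m hm
  induction m, hm using Nat.le_induction with
  | base =>
    intro _
    refine ⟨fun _ => Classical.arbitrary α, fun i hi j hj _ => by simp_all, fun i hi => ?_,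
      isGood_const hexp (by simpa using hdeg 0 (by omega)) _⟩
    simp at hi
  | succ m hm ih =>
    intro hmn
    obtain ⟨g, hg, hadj, hgood⟩ := ih (by omega)
    have hpm := hp m (mem_Ico.2 ⟨hm, hmn⟩)
    have hchild : pending p n (m + 1) m + 1 ≤ d := by
      have := pending_anti (p := p) (n := n) (by omega : 1 ≤ m + 1) m
      have := hdeg m hmn
      rw [if_neg (by omega)] at this
      omega
    obtain ⟨w, hw, hgood'⟩ :=
      exists_isGood_update hexp hg (hpend m hm (by omega)) hmn hpm hchild hgood
    rw [mem_sdiff, mem_neighborFinset] at hw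
    refine ⟨Function.update g m w, hg.update_nat (by simpa [placed] using hw.2),
      fun i hi => ?_, hgood'⟩
    obtain ⟨hi1, hi⟩ := mem_Ico.1 hi
    rcases Nat.lt_succ_iff_lt_or_eq.1 hi with hi | rfl
    · have := hp i (mem_Ico.2 ⟨hi1, by omega⟩)
      rw [Function.update_of_ne (by omega), Function.update_of_ne hi.ne]
      exact hadj i (mem_Ico.2 ⟨hi1, hi⟩)
    · rw [Function.update_self, Function.update_of_ne hpm.ne]
      exact hw.1

end FriedmanPippenger

theorem statement10_general {α : Type} [Fintype α] [Nonempty α] (n d : ℕ)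
    (H : SimpleGraph α)
    (hexp : ∀ X : Set α, 1 ≤ X.ncard → X.ncard ≤ 2 * n - 2 →
      (d + 1) * X.ncard ≤ {v : α | ∃ x ∈ X, H.Adj x v}.ncard) :
    ∀ (β : Type) [Fintype β] (T : SimpleGraph β), T.IsTree →
      Fintype.card β = n → MaxDegLE T d → HasCopy H T := by
  intro β _ T hT hcard hdeg
  classical
  subst hcard
  have := hT.connected.nonempty
  obtain ⟨e, p, he, hpar⟩ := hT.connected.exists_isParentOrder
  have hexp' : FriedmanPippenger.IsExpanding H (2 * Fintype.card β - 2) (d + 1) := by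
    intro X h1 h2
    have hN : {v : α | ∃ x ∈ (X : Set α), H.Adj x v} = ↑(FriedmanPippenger.nbhd H X) := by
      ext
      simp [FriedmanPippenger.nbhd]
    have := hexp X (by rwa [Set.ncard_coe_finset]) (by rwa [Set.ncard_coe_finset])
    rwa [hN, Set.ncard_coe_finset, Set.ncard_coe_finset] at this
  obtain ⟨g, hg, hH⟩ := FriedmanPippenger.exists_injOn_isParentOrder hexp' Fintype.card_pos
    (fun i hi => (hpar i hi).1) fun i hi => (hpar.card_children_add_le he.injOn hi).trans (hdeg _)
  exact hH.hasCopy hg he fun u v huv => hT.exists_parent_eq_of_adj he.injOn hpar huv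

/-- Let `n, d ≥ 1` and let `H` be a non-empty graph such that
`|Γ_H(X)| ≥ (d+1)|X|` for every vertex set `X` with `1 ≤ |X| ≤ 2n - 2`. Then `H`
contains a copy of every tree with `n` vertices and maximum degree at most `d`. -/
theorem statement10 {α : Type} [Fintype α] [Nonempty α] (n d : ℕ)
    (hn : 1 ≤ n) (hd : 1 ≤ d) (H : SimpleGraph α)
    (hexp : ∀ X : Set α, 1 ≤ X.ncard → X.ncard ≤ 2 * n - 2 →
      (d + 1) * X.ncard ≤ {v : α | ∃ x ∈ X, H.Adj x v}.ncard) :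
    ∀ (β : Type) [Fintype β] (T : SimpleGraph β), T.IsTree →
      Fintype.card β = n → MaxDegLE T d → HasCopy H T :=
  statement10_general n d H hexp
end
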